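/- Suppose φ, Xα, Xβ, ξ : D → ℝ⁴ are smooth, satisfy the structure system, are orthonormal at every point of D, and f : D → ℝ⁴ is an associated curvature surface. Then the map (x,y) ↦ f(x,y) − (2√5(1+y²))^{−1}(Xβ(x,y) − 2(1+y²) ξ(x,y) + y φ(x,y)) has identically vanishing partial derivative in x; denoting its value by A(y), every x-curve satisfies ‖f(x,y) − A(y)‖ = (2√5)^{−1} √((5+4y²)/(1+y²)) and ⟨f(x,y) − A(y), y Xβ(x,y) − φ(x,y)⟩ = 0 for all (x,y) ∈ D. In particular, for each fixed y the x-curve x ↦ f(x,y) lies on a 2-sphere of radius (2√5)^{−1} √((5+4y²)/(1+y²)) centered at A(y) in the affine hyperplane through A(y) perpendicular to u(y) := (1+y²)^{−1/2}(y Xβ − φ). -/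

import Mathlib

open Real Set

noncomputable section

/-- `h(x,y) = 2X₀(x) − x X₀'(x) + y² g(x) + √5`. -/
def hfun (X0 g : ℝ → ℝ) (x y : ℝ) : ℝ :=
  2 * X0 x - x * deriv X0 x + y ^ 2 * g x + Real.sqrt 5

/-- `a₁(x,y) = (2y/(x h(x,y)))(X₀(x) + √5/2)`. -/
def a1 (X0 g : ℝ → ℝ) (x y : ℝ) : ℝ :=
  2 * y / (x * hfun X0 g x y) * (X0 x + Real.sqrt 5 / 2)

/-- `b₁(x,y) = −(1/(x h(x,y)))(X₀(x) + √5/2 + √5(x² − y²))`. -/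
def b1 (X0 g : ℝ → ℝ) (x y : ℝ) : ℝ :=
  -(1 / (x * hfun X0 g x y)) * (X0 x + Real.sqrt 5 / 2 + Real.sqrt 5 * (x ^ 2 - y ^ 2))

/-- `c₁(x,y) = −(2/(x h(x,y)))(X₀(x) + √5/2)`. -/
def c1 (X0 g : ℝ → ℝ) (x y : ℝ) : ℝ :=
  -(2 / (x * hfun X0 g x y)) * (X0 x + Real.sqrt 5 / 2)

/-- `a₂(x,y) = −(1/h(x,y))(2X₀(x) + √5 − (x² + y²) g(x))`. -/
def a2 (X0 g : ℝ → ℝ) (x y : ℝ) : ℝ :=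
  -(1 / hfun X0 g x y) * (2 * X0 x + Real.sqrt 5 - (x ^ 2 + y ^ 2) * g x)

/-- `b₂(x,y) = −(2y/h(x,y))(g(x)/2 + √5)`. -/
def b2 (X0 g : ℝ → ℝ) (x y : ℝ) : ℝ :=
  -(2 * y / hfun X0 g x y) * (g x / 2 + Real.sqrt 5)

/-- `c₂(x,y) = (2y/h(x,y))(X₀''(x) − g(x))`. -/
def c2 (X0 g : ℝ → ℝ) (x y : ℝ) : ℝ :=
  2 * y / hfun X0 g x y * (iteratedDeriv 2 X0 x - g x)

end

noncomputable section

/-- Euclidean `ℝ⁴`. -/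
abbrev E4 := EuclideanSpace ℝ (Fin 4)

/-- The maps `φ, Xα, Xβ, ξ : D → ℝ⁴` satisfy the structure system
`∂φ/∂x = −a₁Xα`, `∂Xα/∂x = a₁φ − b₁ξ − c₁Xβ`, `∂Xβ/∂x = c₁Xα`, `∂ξ/∂x = b₁Xα`,
`∂φ/∂y = −a₂Xβ`, `∂Xβ/∂y = a₂φ − b₂ξ − c₂Xα`, `∂Xα/∂y = c₂Xβ`, `∂ξ/∂y = b₂Xβ`
on `D = {x > 0}`. -/
def StructSys (X0 g : ℝ → ℝ) (φ Xa Xb ξ : ℝ → ℝ → E4) : Prop :=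
  ∀ x y : ℝ, 0 < x →
    HasDerivAt (fun s => φ s y) ((-a1 X0 g x y) • Xa x y) x ∧
    HasDerivAt (fun s => Xa s y)
      (a1 X0 g x y • φ x y - b1 X0 g x y • ξ x y - c1 X0 g x y • Xb x y) x ∧
    HasDerivAt (fun s => Xb s y) (c1 X0 g x y • Xa x y) x ∧
    HasDerivAt (fun s => ξ s y) (b1 X0 g x y • Xa x y) x ∧
    HasDerivAt (fun t => φ x t) ((-a2 X0 g x y) • Xb x y) y ∧
    HasDerivAt (fun t => Xb x t)
      (a2 X0 g x y • φ x y - b2 X0 g x y • ξ x y - c2 X0 g x y • Xa x y) y ∧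
    HasDerivAt (fun t => Xa x t) (c2 X0 g x y • Xb x y) y ∧
    HasDerivAt (fun t => ξ x t) (b2 X0 g x y • Xb x y) y

/-- Smoothness of a two-parameter map on `D = {x > 0}`. -/
def SmoothOnD (φ : ℝ → ℝ → E4) : Prop :=
  ContDiffOn ℝ (⊤ : ℕ∞) (fun p : ℝ × ℝ => φ p.1 p.2) {p : ℝ × ℝ | 0 < p.1}

/-- `(φ, Xα, Xβ, ξ)` is an orthonormal system at every point of `D = {x > 0}`. -/
def OrthFrame (φ Xa Xb ξ : ℝ → ℝ → E4) : Prop :=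
  ∀ x y : ℝ, 0 < x → Orthonormal ℝ ![φ x y, Xa x y, Xb x y, ξ x y]

/-- `f` is an associated curvature surface: `∂f/∂x = ((x²−y²)/(x h)) Xα` and
`∂f/∂y = (2y/h) Xβ` on `D = {x > 0}`. -/
def CurvSurf (X0 g : ℝ → ℝ) (Xa Xb f : ℝ → ℝ → E4) : Prop :=
  ∀ x y : ℝ, 0 < x →
    HasDerivAt (fun s => f s y)
      (((x ^ 2 - y ^ 2) / (x * hfun X0 g x y)) • Xa x y) x ∧
    HasDerivAt (fun t => f x t) ((2 * y / hfun X0 g x y) • Xb x y) y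

end


/-! Along an `x`-curve the structure system moves `φ`, `Xβ` and `ξ` only in the direction `Xα`,
with coefficients `-a₁`, `c₁`, `b₁`, and `c₁ - 2(1+y²) b₁ - y a₁ = 2√5(1+y²) (x²-y²)/(x h)`.
Hence `f - (2√5(1+y²))⁻¹ (Xβ - 2(1+y²) ξ + y φ)` has `x`-derivative zero and equals a point `A(y)`.
In the orthonormal frame, `f - A(y)` has coordinates proportional to `(y, 0, 1, -2(1+y²))`,
which gives its length and its orthogonality to `y Xβ - φ`. -/

theorem c1_sub_mul_b1_sub_mul_a1 (X0 g : ℝ → ℝ) (x y : ℝ) :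
    c1 X0 g x y - 2 * (1 + y ^ 2) * b1 X0 g x y - y * a1 X0 g x y
      = 2 * Real.sqrt 5 * (1 + y ^ 2) * ((x ^ 2 - y ^ 2) / (x * hfun X0 g x y)) := by
  simp only [a1, b1, c1]
  ring

section Frame

variable {E : Type*} [NormedAddCommGroup E] [InnerProductSpace ℝ E] {φ α β ξ : E}

theorem sub_smul_add_smul_eq_sum (c y : ℝ) :
    β - c • ξ + y • φ = ∑ i, ![y, 0, 1, -c] i • ![φ, α, β, ξ] i := by
  simp only [Fin.sum_univ_four, Fin.isValue, Matrix.cons_val_zero, Matrix.cons_val_one,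
    Matrix.cons_val, zero_smul, add_zero, one_smul, neg_smul]
  module

theorem Orthonormal.norm_sq_sub_smul_add_smul (h : Orthonormal ℝ ![φ, α, β, ξ]) (c y : ℝ) :
    ‖β - c • ξ + y • φ‖ ^ 2 = 1 + c ^ 2 + y ^ 2 := by
  rw [← real_inner_self_eq_norm_sq, sub_smul_add_smul_eq_sum, h.inner_sum, Fin.sum_univ_four]
  simp only [Fin.isValue, Matrix.cons_val_zero, Matrix.cons_val_one, Matrix.cons_val,
    ringHom_apply, mul_zero, add_zero, mul_one, mul_neg, neg_mul, neg_neg]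
  ring

theorem Orthonormal.inner_sub_smul_add_smul (h : Orthonormal ℝ ![φ, α, β, ξ]) (c y : ℝ) :
    inner ℝ (β - c • ξ + y • φ) (y • β - φ) = 0 := by
  have hnormal : y • β - φ = ∑ i, ![-1, 0, y, 0] i • ![φ, α, β, ξ] i := by
    simp only [Fin.sum_univ_four, Fin.isValue, Matrix.cons_val_zero, Matrix.cons_val_one,
      Matrix.cons_val, zero_smul, add_zero, one_smul, neg_smul]
    module
  rw [sub_smul_add_smul_eq_sum, hnormal, h.inner_sum, Fin.sum_univ_four]
  simp

end Frame

noncomputable def sphereCenter (φ Xb ξ f : ℝ → ℝ → E4) (x y : ℝ) : E4 :=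
  f x y - (2 * Real.sqrt 5 * (1 + y ^ 2))⁻¹ • (Xb x y - (2 * (1 + y ^ 2)) • ξ x y + y • φ x y)

variable {X0 g : ℝ → ℝ} {φ Xa Xb ξ f : ℝ → ℝ → E4}

theorem hasDerivAt_sphereCenter (hsys : StructSys X0 g φ Xa Xb ξ)
    (hcurv : CurvSurf X0 g Xa Xb f) {x : ℝ} (y : ℝ) (hx : 0 < x) :
    HasDerivAt (fun s => sphereCenter φ Xb ξ f s y) 0 x := by
  obtain ⟨hφ, -, hXb, hξ, -⟩ := hsys x y hx
  have hD := (hcurv x y hx).1.fun_sub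
    (((hXb.fun_sub (hξ.fun_const_smul (2 * (1 + y ^ 2)))).fun_add
      (hφ.fun_const_smul y)).fun_const_smul (2 * Real.sqrt 5 * (1 + y ^ 2))⁻¹)
  have hcoef : (x ^ 2 - y ^ 2) / (x * hfun X0 g x y) = (2 * Real.sqrt 5 * (1 + y ^ 2))⁻¹ *
      (c1 X0 g x y - 2 * (1 + y ^ 2) * b1 X0 g x y - y * a1 X0 g x y) := by
    rw [c1_sub_mul_b1_sub_mul_a1, inv_mul_cancel_left₀ (by positivity)]
  refine hD.congr_deriv ?_
  linear_combination (norm := module) hcoef • Xa x y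

theorem sphereCenter_eq_of_pos (hsys : StructSys X0 g φ Xa Xb ξ)
    (hcurv : CurvSurf X0 g Xa Xb f) {x x' : ℝ} (y : ℝ) (hx : 0 < x) (hx' : 0 < x') :
    sphereCenter φ Xb ξ f x y = sphereCenter φ Xb ξ f x' y := by
  have hd : ∀ z ∈ Ioi (0 : ℝ), HasDerivAt (fun s => sphereCenter φ Xb ξ f s y) 0 z :=
    fun z hz => hasDerivAt_sphereCenter hsys hcurv y hz
  exact isOpen_Ioi.is_const_of_deriv_eq_zero isPreconnected_Ioi
    (fun z hz => (hd z hz).differentiableAt.differentiableWithinAt)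
    (fun z hz => (hd z hz).deriv) hx hx'

theorem norm_sub_sphereCenter (horth : OrthFrame φ Xa Xb ξ) {x : ℝ} (y : ℝ) (hx : 0 < x) :
    ‖f x y - sphereCenter φ Xb ξ f x y‖
      = (2 * Real.sqrt 5)⁻¹ * Real.sqrt ((5 + 4 * y ^ 2) / (1 + y ^ 2)) := by
  have hy : 0 < 1 + y ^ 2 := by positivity
  have hw := (horth x y hx).norm_sq_sub_smul_add_smul (2 * (1 + y ^ 2)) y
  rw [sphereCenter, sub_sub_cancel, norm_smul, Real.norm_eq_abs,
    abs_of_pos (by positivity), ← Real.sqrt_sq (norm_nonneg (_ : E4)), hw,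
    Real.sqrt_div (by positivity), show (1 + (2 * (1 + y ^ 2)) ^ 2 + y ^ 2)
      = (1 + y ^ 2) * (5 + 4 * y ^ 2) by ring, Real.sqrt_mul hy.le]
  have hs : Real.sqrt (1 + y ^ 2) ^ 2 = 1 + y ^ 2 := Real.sq_sqrt hy.le
  have : Real.sqrt (1 + y ^ 2) ≠ 0 := by positivity
  field_simp
  linear_combination hs

theorem inner_sub_sphereCenter (horth : OrthFrame φ Xa Xb ξ) {x : ℝ} (y : ℝ) (hx : 0 < x) :
    inner ℝ (f x y - sphereCenter φ Xb ξ f x y) (y • Xb x y - φ x y) = (0 : ℝ) := by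
  rw [sphereCenter, sub_sub_cancel, real_inner_smul_left,
    (horth x y hx).inner_sub_smul_add_smul, mul_zero]

theorem stmt13_general
    (X0 : ℝ → ℝ)
    (g : ℝ → ℝ)
    (φ Xa Xb ξ f : ℝ → ℝ → E4)
    (hsys : StructSys X0 g φ Xa Xb ξ)
    (horth : OrthFrame φ Xa Xb ξ)
    (hcurv : CurvSurf X0 g Xa Xb f) :
    (∀ x y : ℝ, 0 < x →
      HasDerivAt
        (fun s => f s y
          - (2 * Real.sqrt 5 * (1 + y ^ 2))⁻¹ •
              (Xb s y - (2 * (1 + y ^ 2)) • ξ s y + y • φ s y)) (0 : E4) x) ∧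
    ∃ A : ℝ → E4,
      (∀ x y : ℝ, 0 < x →
        f x y - (2 * Real.sqrt 5 * (1 + y ^ 2))⁻¹ •
            (Xb x y - (2 * (1 + y ^ 2)) • ξ x y + y • φ x y) = A y) ∧
      (∀ x y : ℝ, 0 < x →
        ‖f x y - A y‖ = (2 * Real.sqrt 5)⁻¹ * Real.sqrt ((5 + 4 * y ^ 2) / (1 + y ^ 2)) ∧
        inner ℝ (f x y - A y) (y • Xb x y - φ x y) = (0 : ℝ)) := by
  refine ⟨fun x y hx => hasDerivAt_sphereCenter hsys hcurv y hx,
    sphereCenter φ Xb ξ f 1,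
    fun x y hx => sphereCenter_eq_of_pos hsys hcurv y hx one_pos, fun x y hx => ?_⟩
  rw [← sphereCenter_eq_of_pos hsys hcurv y hx one_pos]
  exact ⟨norm_sub_sphereCenter horth y hx, inner_sub_sphereCenter horth y hx⟩

/-- Under the structure system, orthonormality and the curvature-surface
equations, the map `(x,y) ↦ f(x,y) − (2√5(1+y²))⁻¹(Xβ − 2(1+y²)ξ + yφ)` has vanishing
`x`-derivative; its value `A(y)` is the center of a 2-sphere of radius
`(2√5)⁻¹√((5+4y²)/(1+y²))` containing the `x`-curve, in the affine hyperplane through `A(y)`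
perpendicular to `u(y) = (1+y²)^{−1/2}(y Xβ − φ)`. -/
theorem stmt13 (a : ℕ → ℝ) (ha1 : a 1 = 1)
    (harec : ∀ k : ℕ, 1 ≤ k →
      2 * ((k : ℝ) + 1) * (4 * (k : ℝ) ^ 2 + 5 / 4) * a (k + 1) + (2 * (k : ℝ) - 1) * a k = 0)
    (X0 : ℝ → ℝ)
    (hX0 : ∀ x : ℝ, HasSum (fun k : ℕ => a (k + 1) * x ^ (2 * (k + 1))) (X0 x - 5 / 2))
    (g : ℝ → ℝ) (hganal : AnalyticOnNhd ℝ g Set.univ)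
    (hg : ∀ x : ℝ, x ≠ 0 → g x = deriv X0 x / x) (hg0 : g 0 = 2)
    (φ Xa Xb ξ f : ℝ → ℝ → E4)
    (hsm : SmoothOnD φ ∧ SmoothOnD Xa ∧ SmoothOnD Xb ∧ SmoothOnD ξ ∧ SmoothOnD f)
    (hsys : StructSys X0 g φ Xa Xb ξ)
    (horth : OrthFrame φ Xa Xb ξ)
    (hcurv : CurvSurf X0 g Xa Xb f) :
    (∀ x y : ℝ, 0 < x →
      HasDerivAt
        (fun s => f s y
          - (2 * Real.sqrt 5 * (1 + y ^ 2))⁻¹ •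
              (Xb s y - (2 * (1 + y ^ 2)) • ξ s y + y • φ s y)) (0 : E4) x) ∧
    ∃ A : ℝ → E4,
      (∀ x y : ℝ, 0 < x →
        f x y - (2 * Real.sqrt 5 * (1 + y ^ 2))⁻¹ •
            (Xb x y - (2 * (1 + y ^ 2)) • ξ x y + y • φ x y) = A y) ∧
      (∀ x y : ℝ, 0 < x →
        ‖f x y - A y‖ = (2 * Real.sqrt 5)⁻¹ * Real.sqrt ((5 + 4 * y ^ 2) / (1 + y ^ 2)) ∧
        inner ℝ (f x y - A y) (y • Xb x y - φ x y) = (0 : ℝ)) :=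
  stmt13_general X0 g φ Xa Xb ξ f hsys horth hcurv
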